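/- If G is a hypo-efficient-domination graph of order n, then 2 ≤ γ(G) ≤ n/2, and γ(G) = n/2 holds if and only if G is isomorphic to the 4-cycle C_4. -/

import Mathlib

open SimpleGraph

variable {V : Type*}

/-- `D` is a dominating set of `G`. -/
def IsDomSet (G : SimpleGraph V) (D : Finset V) : Prop :=
  ∀ v : V, ∃ u ∈ D, u = v ∨ G.Adj u v

/-- The domination number `γ(G)`. -/
noncomputable def domNum (G : SimpleGraph V) : ℕ :=
  sInf {n | ∃ D : Finset V, IsDomSet G D ∧ D.card = n}

/-- `D` is a minimum dominating set (γ-set) of `G`. -/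
def IsGammaSet (G : SimpleGraph V) (D : Finset V) : Prop :=
  IsDomSet G D ∧ D.card = domNum G

/-- The graph `G - x` obtained by deleting the vertex `x`. -/
def vdel (G : SimpleGraph V) (x : V) : SimpleGraph {u : V // u ≠ x} :=
  SimpleGraph.comap Subtype.val G

/-- `G` is a hypo-unique-domination graph: `G` has at least two γ-sets,
but `G - x` has a unique γ-set for every vertex `x`. -/
def HypoUD (G : SimpleGraph V) : Prop :=
  (∃ D₁ D₂ : Finset V, IsGammaSet G D₁ ∧ IsGammaSet G D₂ ∧ D₁ ≠ D₂) ∧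
  ∀ x : V, ∃! D : Finset {u : V // u ≠ x}, IsGammaSet (vdel G x) D

/-- `D` is an efficient dominating set of `G`: every vertex is dominated exactly once. -/
def IsEDS (G : SimpleGraph V) (D : Finset V) : Prop :=
  ∀ v : V, ∃! u : V, u ∈ D ∧ (u = v ∨ G.Adj u v)

/-- `G` is a hypo-efficient-domination graph: `G` has no EDS,
but `G - x` has an EDS for every vertex `x`. -/
def HypoED (G : SimpleGraph V) : Prop :=
  (¬ ∃ D : Finset V, IsEDS G D) ∧
  ∀ x : V, ∃ D : Finset {u : V // u ≠ x}, IsEDS (vdel G x) D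

/-!
A dominating set with at most one vertex is automatically efficient, so `γ ≥ 2`; an isolated
vertex could be added to an EDS of `G - v`, so `G` has none and Ore's bound `2γ ≤ n` applies.

Suppose `2γ = n` and let `D` be an EDS of `G - x`. Then `D + x` dominates `G`, so `γ ≤ |D| + 1`,
while the closed neighbourhoods of `D` partition `V - x`, so `∑_{d ∈ D} |N[d] - x| = 2γ - 1`.
A pendant vertex `p` with neighbour `s` is impossible: for `x = p` one gets `s ∉ D`,
`|D| = γ - 1`, the vertex `d₁ ∈ D` dominating `s` has exactly one other neighbour `b`, `b` is
pendant, and `D - d₁ + p + b` is an EDS of `G`; at each step the alternative produces a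
dominating set of size `< γ`. So every degree is at least `2`, the count gives `|D| ≤ 1` and
`n = 4`, and since no vertex dominates, `G` is `2`-regular on four vertices, i.e. `C₄`.
-/

open Finset

namespace SimpleGraph

variable [Fintype V] [DecidableEq V] (G : SimpleGraph V) [DecidableRel G.Adj]

def closedNbhd (v : V) : Finset V := insert v (G.neighborFinset v)

variable {G}

@[simp]
lemma mem_closedNbhd {v w : V} : w ∈ G.closedNbhd v ↔ w = v ∨ G.Adj v w := by
  simp [closedNbhd]

lemma mem_closedNbhd_comm {v w : V} : w ∈ G.closedNbhd v ↔ v ∈ G.closedNbhd w := by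
  simp only [mem_closedNbhd, G.adj_comm, eq_comm]

lemma self_mem_closedNbhd (v : V) : v ∈ G.closedNbhd v := mem_insert_self _ _

lemma card_closedNbhd (v : V) : #(G.closedNbhd v) = G.degree v + 1 := by
  rw [closedNbhd, card_insert_of_notMem (by simp), card_neighborFinset_eq_degree]

lemma exists_neighborFinset_eq_pair {v s : V} (hv : G.degree v = 2) (hs : G.Adj v s) :
    ∃ b, s ≠ b ∧ G.neighborFinset v = {s, b} := by
  have hs' := (G.mem_neighborFinset v s).2 hs
  have hcard : #((G.neighborFinset v).erase s) = 1 := by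
    rw [card_erase_of_mem hs', card_neighborFinset_eq_degree, hv]
  obtain ⟨b, hb⟩ := card_eq_one.1 hcard
  refine ⟨b, fun hsb => notMem_erase s (G.neighborFinset v) ?_,
    by rw [← hb, insert_erase hs']⟩
  rw [hb, hsb]
  exact mem_singleton_self b

variable (G) in
lemma sum_card_closedNbhd_inter (D S : Finset V) :
    ∑ d ∈ D, #(G.closedNbhd d ∩ S) = ∑ v ∈ S, #(D ∩ G.closedNbhd v) := by
  convert sum_card_bipartiteAbove_eq_sum_card_bipartiteBelow
    (fun d v => v ∈ G.closedNbhd d) (s := D) (t := S) using 3 with d _ v _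
  · ext; simp [bipartiteAbove, and_comm]
  · ext; simp [bipartiteBelow, mem_closedNbhd_comm (v := v)]

end SimpleGraph

lemma Finset.forall_eq_one_of_sum_le_card {ι : Type*} {s : Finset ι} {f : ι → ℕ}
    (h1 : ∀ i ∈ s, 1 ≤ f i) (hs : ∑ i ∈ s, f i ≤ #s) : ∀ i ∈ s, f i = 1 := by
  refine fun i hi => ((sum_eq_sum_iff_of_le h1).1 ?_ i hi).symm
  rw [← card_eq_sum_ones]
  exact le_antisymm (by simpa using card_nsmul_le_sum s f 1 h1) hs

section Domination

variable {G : SimpleGraph V} {D : Finset V}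

lemma IsDomSet.domNum_le (hD : IsDomSet G D) : domNum G ≤ #D :=
  Nat.sInf_le ⟨D, hD, rfl⟩

variable [Fintype V]

variable (G) in
lemma exists_isGammaSet : ∃ D, IsGammaSet G D :=
  Nat.sInf_mem (s := {n | ∃ D : Finset V, IsDomSet G D ∧ #D = n})
    ⟨_, univ, fun v => ⟨v, mem_univ v, Or.inl rfl⟩, rfl⟩

lemma two_le_domNum (hG : ¬ ∃ D, IsEDS G D) : 2 ≤ domNum G := by
  obtain ⟨D, hD, hcard⟩ := exists_isGammaSet G
  by_contra! hlt
  refine hG ⟨D, fun v => ?_⟩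
  obtain ⟨u, hu, huv⟩ := hD v
  exact ⟨u, ⟨hu, huv⟩, fun w hw => card_le_one.1 (by omega) _ hw.1 _ hu⟩

variable [DecidableEq V]

lemma exists_isGammaSet_isDomSet_compl (hG : ∀ v, ∃ w, G.Adj v w) :
    ∃ D, IsGammaSet G D ∧ IsDomSet G Dᶜ := by
  obtain ⟨D, hD, hcard⟩ := exists_isGammaSet G
  refine ⟨D, ⟨hD, hcard⟩, fun v => ?_⟩
  by_cases hv : v ∈ D
  swap
  · exact ⟨v, mem_compl.2 hv, Or.inl rfl⟩
  by_contra! hout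
  have hnbr : ∀ w, G.Adj v w → w ∈ D := fun w hw =>
    not_not.1 fun hw' => (hout w (mem_compl.2 hw')).2 hw.symm
  -- otherwise `v` could be dropped from the minimum dominating set `D`
  have hdom : IsDomSet G (D.erase v) := by
    intro u
    obtain ⟨t, ht, htu⟩ := hD u
    by_cases htv : t = v
    · subst htv
      rcases htu with rfl | hadj
      · obtain ⟨w, hw⟩ := hG t
        exact ⟨w, mem_erase.2 ⟨hw.ne.symm, hnbr w hw⟩, Or.inr hw.symm⟩
      · exact ⟨u, mem_erase.2 ⟨hadj.ne.symm, hnbr u hadj⟩, Or.inl rfl⟩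
    · exact ⟨t, mem_erase.2 ⟨htv, ht⟩, htu⟩
  have := hdom.domNum_le
  rw [card_erase_of_mem hv] at this
  have := card_pos.2 ⟨v, hv⟩
  omega

lemma two_mul_domNum_le_card (hG : ∀ v, ∃ w, G.Adj v w) : 2 * domNum G ≤ Fintype.card V := by
  obtain ⟨D, ⟨-, hcard⟩, hcompl⟩ := exists_isGammaSet_isDomSet_compl hG
  have := hcompl.domNum_le
  rw [card_compl] at this
  have := card_le_univ D
  omega

variable [DecidableRel G.Adj]

lemma isDomSet_iff : IsDomSet G D ↔ ∀ v, ∃ u ∈ D, v ∈ G.closedNbhd u := by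
  simp [IsDomSet, eq_comm]

lemma existsUnique_iff_card_inter_closedNbhd {v : V} :
    (∃! u, u ∈ D ∧ (u = v ∨ G.Adj u v)) ↔ #(D ∩ G.closedNbhd v) = 1 := by
  rw [Fintype.existsUnique_iff_card_one]
  congr! 2
  ext u
  simp [G.adj_comm]

lemma isEDS_iff : IsEDS G D ↔ ∀ v, #(D ∩ G.closedNbhd v) = 1 := by
  simp only [IsEDS, existsUnique_iff_card_inter_closedNbhd]

lemma isEDS_of_isDomSet_of_sum_card_le (hD : IsDomSet G D)
    (hsum : ∑ d ∈ D, #(G.closedNbhd d) ≤ Fintype.card V) : IsEDS G D := by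
  have hcount := sum_card_closedNbhd_inter G D univ
  simp only [inter_univ] at hcount
  refine isEDS_iff.2 fun v => forall_eq_one_of_sum_le_card (s := univ) (fun v _ => ?_)
    (by rwa [← hcount, card_univ]) v (mem_univ v)
  obtain ⟨u, hu, hvu⟩ := isDomSet_iff.1 hD v
  exact card_pos.2 ⟨u, mem_inter.2 ⟨hu, mem_closedNbhd_comm.1 hvu⟩⟩

end Domination

section EDSDel

variable [Fintype V] [DecidableEq V] {G : SimpleGraph V} [DecidableRel G.Adj]

variable (G) in
/-- An efficient dominating set of `vdel G x`, read as a set of vertices of `G`. -/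
def IsEDSDel (x : V) (D : Finset V) : Prop :=
  x ∉ D ∧ ∀ v, v ≠ x → #(D ∩ G.closedNbhd v) = 1

lemma HypoED.exists_isEDSDel (h : HypoED G) (x : V) : ∃ D, IsEDSDel G x D := by
  obtain ⟨D, hD⟩ := h.2 x
  refine ⟨D.map (Function.Embedding.subtype _), by simp, fun v hv => ?_⟩
  rw [← existsUnique_iff_card_inter_closedNbhd]
  obtain ⟨u, ⟨huD, huv⟩, huniq⟩ := hD ⟨v, hv⟩
  refine ⟨u, ⟨mem_map_of_mem _ huD, by simpa [Subtype.ext_iff, vdel] using huv⟩, ?_⟩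
  rintro _ ⟨hw, hwv⟩
  obtain ⟨w, hwD, rfl⟩ := mem_map.1 hw
  exact congrArg Subtype.val (huniq w ⟨hwD, by simpa [Subtype.ext_iff, vdel] using hwv⟩)

namespace IsEDSDel

variable {x : V} {D : Finset V}

lemma exists_mem (hD : IsEDSDel G x D) {v : V} (hv : v ≠ x) :
    ∃ d ∈ D, v ∈ G.closedNbhd d := by
  obtain ⟨d, hd⟩ := card_pos.1 ((hD.2 v hv).symm ▸ one_pos)
  exact ⟨d, (mem_inter.1 hd).1, mem_closedNbhd_comm.1 (mem_inter.1 hd).2⟩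

lemma eq_of_mem (hD : IsEDSDel G x D) {v d d' : V} (hv : v ≠ x) (hd : d ∈ D) (hd' : d' ∈ D)
    (hvd : v ∈ G.closedNbhd d) (hvd' : v ∈ G.closedNbhd d') : d = d' :=
  card_le_one.1 (hD.2 v hv).le d (mem_inter.2 ⟨hd, mem_closedNbhd_comm.1 hvd⟩)
    d' (mem_inter.2 ⟨hd', mem_closedNbhd_comm.1 hvd'⟩)

lemma isDomSet_of_forall (hD : IsEDSDel G x D) {T : Finset V}
    (hx : ∃ t ∈ T, x ∈ G.closedNbhd t)
    (hT : ∀ d ∈ D, ∀ v ∈ G.closedNbhd d, ∃ t ∈ T, v ∈ G.closedNbhd t) :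
    IsDomSet G T := by
  refine isDomSet_iff.2 fun v => ?_
  by_cases hv : v = x
  · exact hv ▸ hx
  obtain ⟨d, hd, hvd⟩ := hD.exists_mem hv
  exact hT d hd v hvd

lemma domNum_le_card_add_one (hD : IsEDSDel G x D) : domNum G ≤ #D + 1 :=
  (hD.isDomSet_of_forall (T := insert x D) ⟨x, mem_insert_self _ _, self_mem_closedNbhd x⟩
    fun d hd _ hv => ⟨d, mem_insert_of_mem hd, hv⟩).domNum_le.trans (card_insert_le _ _)

lemma domNum_le_card_of_adj (hD : IsEDSDel G x D) {d : V} (hd : d ∈ D) (hdx : G.Adj d x) :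
    domNum G ≤ #D :=
  (hD.isDomSet_of_forall ⟨d, hd, mem_closedNbhd.2 (Or.inr hdx)⟩
    fun d hd _ hv => ⟨d, hd, hv⟩).domNum_le

lemma isEDS (hD : IsEDSDel G x D) (hx : #(D ∩ G.closedNbhd x) = 1) : IsEDS G D :=
  isEDS_iff.2 fun v => if hv : v = x then hv ▸ hx else hD.2 v hv

lemma sum_card_closedNbhd_erase (hD : IsEDSDel G x D) :
    ∑ d ∈ D, #((G.closedNbhd d).erase x) = Fintype.card V - 1 := by
  have := sum_card_closedNbhd_inter G D (univ.erase x)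
  simp only [inter_erase, inter_univ] at this
  rw [this, sum_congr rfl fun v hv => hD.2 v (ne_of_mem_erase hv), sum_const,
    card_erase_of_mem (mem_univ x), card_univ, smul_eq_mul, mul_one]

lemma card_add_one_eq_domNum (hD : IsEDSDel G x D) (heq : 2 * domNum G = Fintype.card V)
    (h2 : ∀ d ∈ D, 2 ≤ #((G.closedNbhd d).erase x)) : #D + 1 = domNum G := by
  have hsum := hD.sum_card_closedNbhd_erase
  have hle := card_nsmul_le_sum D _ 2 h2
  have := hD.domNum_le_card_add_one
  have := Fintype.card_pos_iff.2 ⟨x⟩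
  rw [smul_eq_mul] at hle
  omega

lemma erase_closedNbhd (hD : IsEDSDel G x D) {d : V} (hd : d ∈ D) (hdx : ¬ G.Adj d x) :
    (G.closedNbhd d).erase x = G.closedNbhd d :=
  erase_eq_of_notMem fun hx => (mem_closedNbhd.1 hx).elim (fun h => hD.1 (h ▸ hd)) hdx

lemma not_adj_of_card_add_one_eq (hD : IsEDSDel G x D) (hcard : #D + 1 = domNum G) {d : V}
    (hd : d ∈ D) : ¬ G.Adj d x := fun hdx => by
  have := hD.domNum_le_card_of_adj hd hdx
  omega

lemma sum_degree_eq (hD : IsEDSDel G x D) (heq : 2 * domNum G = Fintype.card V)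
    (hcard : #D + 1 = domNum G) (hx : ∀ d ∈ D, ¬ G.Adj d x) :
    ∑ d ∈ D, G.degree d = #D + 1 := by
  have hsum := hD.sum_card_closedNbhd_erase
  rw [sum_congr rfl fun d hd => by rw [hD.erase_closedNbhd hd (hx d hd), card_closedNbhd],
    sum_add_distrib, sum_const, smul_eq_mul, mul_one] at hsum
  omega

lemma not_closedNbhd_subset (hD : IsEDSDel G x D) (hlt : #D < domNum G) {d s : V}
    (hd : d ∈ D) (hs : x ∈ G.closedNbhd s) : ¬ G.closedNbhd d ⊆ G.closedNbhd s := by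
  intro hsub
  have hdom := hD.isDomSet_of_forall (T := insert s (D.erase d)) ⟨s, mem_insert_self _ _, hs⟩
    fun d' hd' v hv => by
      by_cases h : d' = d
      · exact ⟨s, mem_insert_self _ _, hsub (h ▸ hv)⟩
      · exact ⟨d', mem_insert_of_mem (mem_erase.2 ⟨h, hd'⟩), hv⟩
  have := hdom.domNum_le.trans (card_insert_le _ _)
  rw [card_erase_of_mem hd] at this
  have := card_pos.2 ⟨d, hd⟩
  omega

lemma degree_eq_two (hD : IsEDSDel G x D) (heq : 2 * domNum G = Fintype.card V)
    (hcard : #D + 1 = domNum G) (hx : ∀ d ∈ D, ¬ G.Adj d x) (hpos : ∀ v, ∃ w, G.Adj v w)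
    {d s : V} (hd : d ∈ D) (hsx : G.Adj s x) (hds : G.Adj d s) : G.degree d = 2 := by
  have hsum := hD.sum_degree_eq heq hcard hx
  have hlow : 2 ≤ G.degree d := by
    by_contra! hlt
    have hN : G.neighborFinset d = {s} := eq_singleton_iff_unique_mem.2
      ⟨(G.mem_neighborFinset d s).2 hds, fun w hw => card_le_one.1
        (by rw [card_neighborFinset_eq_degree]; omega) w hw s ((G.mem_neighborFinset d s).2 hds)⟩
    refine hD.not_closedNbhd_subset (by omega) hd (mem_closedNbhd.2 (Or.inr hsx)) ?_
    rw [closedNbhd, hN]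
    simp [insert_subset_iff, hds.symm]
  have hrest := card_nsmul_le_sum (D.erase d) (G.degree ·) 1 fun d' _ =>
    Nat.one_le_iff_ne_zero.2 ((G.degree_pos_iff_exists_adj d').2 (hpos d')).ne'
  rw [← add_sum_erase D _ hd] at hsum
  rw [card_erase_of_mem hd, smul_eq_mul, mul_one] at hrest
  omega

lemma neighborFinset_eq_singleton (hD : IsEDSDel G x D) (hcard : #D + 1 = domNum G)
    (hsum : ∑ d ∈ D, G.degree d = #D + 1) (hpos : ∀ v, ∃ w, G.Adj v w) {d₁ s b : V}
    (hd₁ : d₁ ∈ D) (hs : G.Adj d₁ s) (hb : G.Adj d₁ b) (hsb : s ≠ b) (hsx : G.Adj s x)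
    (hbx : ¬ G.Adj b x) : G.neighborFinset b = {d₁} := by
  refine eq_singleton_iff_unique_mem.2 ⟨(G.mem_neighborFinset b d₁).2 hb.symm, fun y hy => ?_⟩
  rw [mem_neighborFinset] at hy
  by_contra hyd₁
  have hbx' : b ≠ x := fun h => hD.not_adj_of_card_add_one_eq hcard hd₁ (h ▸ hb)
  -- all neighbours of `D` except `b`: fewer than `γ` vertices, which would dominate `G`
  set R := (D.biUnion (G.neighborFinset ·)).erase b
  have hR : ∀ {d v}, d ∈ D → G.Adj d v → v ≠ b → v ∈ R := fun hd hdv hvb =>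
    mem_erase.2 ⟨hvb, mem_biUnion.2 ⟨_, hd, (G.mem_neighborFinset _ _).2 hdv⟩⟩
  have hRcard : #R < domNum G := by
    have := card_biUnion_le (s := D) (t := (G.neighborFinset ·))
    rw [card_erase_of_mem (mem_biUnion.2 ⟨d₁, hd₁, (G.mem_neighborFinset _ _).2 hb⟩)]
    simp only [card_neighborFinset_eq_degree] at this
    omega
  have hbR : ∃ t ∈ R, b ∈ G.closedNbhd t := by
    obtain ⟨d, hd, hyd⟩ := hD.exists_mem fun h => hbx (h ▸ hy)
    rcases mem_closedNbhd.1 hyd with rfl | hdy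
    · exact absurd (hD.eq_of_mem hbx' hd hd₁ (mem_closedNbhd.2 (Or.inr hy.symm))
        (mem_closedNbhd.2 (Or.inr hb))) hyd₁
    · exact ⟨y, hR hd hdy hy.ne.symm, mem_closedNbhd.2 (Or.inr hy.symm)⟩
  have hdom := hD.isDomSet_of_forall (T := R)
    ⟨s, hR hd₁ hs hsb, mem_closedNbhd.2 (Or.inr hsx)⟩
    fun d hd v hv => by
      rcases mem_closedNbhd.1 hv with rfl | hdv
      · obtain ⟨w, hw⟩ := hpos v
        by_cases hwb : w = b
        · subst hwb
          obtain rfl := hD.eq_of_mem hbx' hd hd₁ (mem_closedNbhd.2 (Or.inr hw))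
            (mem_closedNbhd.2 (Or.inr hb))
          exact ⟨s, hR hd₁ hs hsb, mem_closedNbhd.2 (Or.inr hs.symm)⟩
        · exact ⟨w, hR hd hw hwb, mem_closedNbhd.2 (Or.inr hw.symm)⟩
      · by_cases hvb : v = b
        · exact hvb ▸ hbR
        · exact ⟨v, hR hd hdv hvb, self_mem_closedNbhd v⟩
  have := hdom.domNum_le
  omega

lemma isEDS_insert_insert_erase (hD : IsEDSDel G x D) (hx : ∀ d ∈ D, ¬ G.Adj d x)
    {d₁ b : V} (hd₁ : d₁ ∈ D) (hbD : b ∉ D) (hxb : x ≠ b)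
    (hsub : G.closedNbhd d₁ ⊆ G.closedNbhd x ∪ G.closedNbhd b)
    (hcard : #(G.closedNbhd x) + #(G.closedNbhd b) ≤ #(G.closedNbhd d₁) + 1) :
    IsEDS G (insert x (insert b (D.erase d₁))) := by
  refine isEDS_of_isDomSet_of_sum_card_le (hD.isDomSet_of_forall
    ⟨x, mem_insert_self _ _, self_mem_closedNbhd x⟩ fun d hd v hv => ?_) ?_
  · by_cases h : d = d₁
    · rcases mem_union.1 (hsub (h ▸ hv)) with hv | hv
      · exact ⟨x, mem_insert_self _ _, hv⟩
      · exact ⟨b, mem_insert_of_mem (mem_insert_self _ _), hv⟩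
    · exact ⟨d, mem_insert_of_mem (mem_insert_of_mem (mem_erase.2 ⟨h, hd⟩)), hv⟩
  · have hsum := hD.sum_card_closedNbhd_erase
    rw [sum_congr rfl fun d hd => by rw [hD.erase_closedNbhd hd (hx d hd)],
      ← add_sum_erase D _ hd₁] at hsum
    rw [sum_insert (by simp [hxb, hD.1]), sum_insert (by simp [hbD])]
    have := Fintype.card_pos_iff.2 ⟨x⟩
    omega

end IsEDSDel

end EDSDel

section HypoED

variable [Fintype V] [DecidableEq V] {G : SimpleGraph V} [DecidableRel G.Adj]

lemma HypoED.exists_adj (h : HypoED G) (v : V) : ∃ w, G.Adj v w := by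
  by_contra! hv
  obtain ⟨D, hD⟩ := h.exists_isEDSDel v
  refine h.1 ⟨insert v D, isEDS_iff.2 fun w => ?_⟩
  by_cases hw : w = v
  · subst hw
    rw [show insert w D ∩ G.closedNbhd w = {w} by ext; simp [hv]]
    rfl
  · rw [insert_inter_of_notMem fun hvw => (mem_closedNbhd.1 hvw).elim (hw ·.symm)
      fun hwv => hv w hwv.symm, hD.2 w hw]

lemma HypoED.degree_ne_one (h : HypoED G) (heq : 2 * domNum G = Fintype.card V) (p : V) :
    G.degree p ≠ 1 := by
  intro hp
  obtain ⟨s, hps⟩ := card_eq_one.1 ((G.card_neighborFinset_eq_degree p).trans hp)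
  have hadj_p : ∀ {w}, G.Adj p w ↔ w = s := by simp [← mem_neighborFinset, hps]
  have hsp : G.Adj s p := (hadj_p.2 rfl).symm
  have hpos := h.exists_adj
  obtain ⟨D, hD⟩ := h.exists_isEDSDel p
  have hsD : s ∉ D := fun hs => h.1 ⟨D, hD.isEDS <| card_eq_one.2 ⟨s, by
    ext u
    simp only [closedNbhd, hps, mem_inter, mem_insert, mem_singleton]
    constructor
    · rintro ⟨hu, rfl | rfl⟩
      exacts [absurd hu hD.1, rfl]
    · rintro rfl
      exact ⟨hs, Or.inr rfl⟩⟩⟩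
  have hnadj : ∀ d ∈ D, ¬ G.Adj d p := fun d hd hdp => hsD (hadj_p.1 hdp.symm ▸ hd)
  have hcard : #D + 1 = domNum G := hD.card_add_one_eq_domNum heq fun d hd => by
    rw [hD.erase_closedNbhd hd (hnadj d hd), card_closedNbhd]
    have := (G.degree_pos_iff_exists_adj d).2 (hpos d)
    omega
  obtain ⟨d₁, hd₁, hsd₁⟩ := hD.exists_mem hsp.ne
  have hd₁s : G.Adj d₁ s := (mem_closedNbhd.1 hsd₁).resolve_left fun h => hsD (h ▸ hd₁)
  have hdeg := hD.degree_eq_two heq hcard hnadj hpos hd₁ hsp hd₁s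
  obtain ⟨b, hsb, hNd₁⟩ := exists_neighborFinset_eq_pair hdeg hd₁s
  have hd₁b : G.Adj d₁ b := by simp [← mem_neighborFinset, hNd₁]
  have hbp : b ≠ p := fun h => hnadj d₁ hd₁ (h ▸ hd₁b)
  have hNb := hD.neighborFinset_eq_singleton hcard (hD.sum_degree_eq heq hcard hnadj) hpos hd₁
    hd₁s hd₁b hsb hsp fun hbp => hsb (hadj_p.1 hbp.symm).symm
  refine h.1 ⟨_, hD.isEDS_insert_insert_erase hnadj hd₁ (fun hbD => hd₁b.ne ?_)
    hbp.symm ?_ ?_⟩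
  · exact hD.eq_of_mem hbp hd₁ hbD (mem_closedNbhd.2 (Or.inr hd₁b)) (self_mem_closedNbhd b)
  · rw [closedNbhd, hNd₁]
    simp [insert_subset_iff, hd₁b.symm, hsp.symm]
  · rw [card_closedNbhd, card_closedNbhd, card_closedNbhd, hp, hdeg,
      ← card_neighborFinset_eq_degree, hNb, card_singleton]

lemma HypoED.two_le_degree (h : HypoED G) (heq : 2 * domNum G = Fintype.card V) (v : V) :
    2 ≤ G.degree v := by
  have := (G.degree_pos_iff_exists_adj v).2 (h.exists_adj v)
  have := h.degree_ne_one heq v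
  omega

end HypoED

section CycleGraph

variable {G : SimpleGraph V}

lemma nonempty_iso_cycleGraph_four_of_adj [Fintype V] (hV : Fintype.card V = 4) {a b c d : V}
    (huniv : ∀ v, v = a ∨ v = b ∨ v = c ∨ v = d) (hab : G.Adj a b) (hbc : G.Adj b c)
    (hcd : G.Adj c d) (hda : G.Adj d a) (hac : ¬ G.Adj a c) (hbd : ¬ G.Adj b d) :
    Nonempty (G ≃g cycleGraph 4) := by
  let f : Fin 4 → V := ![a, b, c, d]
  have hf : Function.Bijective f := (Fintype.bijective_iff_surjective_and_card f).2
    ⟨fun v => by rcases huniv v with rfl | rfl | rfl | rfl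
                 exacts [⟨0, rfl⟩, ⟨1, rfl⟩, ⟨2, rfl⟩, ⟨3, rfl⟩], by simp [hV]⟩
  have hca : ¬ G.Adj c a := fun h => hac h.symm
  have hdb : ¬ G.Adj d b := fun h => hbd h.symm
  refine ⟨(RelIso.mk (Equiv.ofBijective f hf) fun {i j} => ?_).symm⟩
  fin_cases i <;> fin_cases j <;>
    simp [f, cycleGraph_adj, hab, hbc, hcd, hda, hac, hbd, hca, hdb, hab.symm, hbc.symm,
      hcd.symm, hda.symm] <;> decide

lemma IsDomSet.map_iso {W : Type*} {H : SimpleGraph W} {D : Finset V} (hD : IsDomSet G D)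
    (φ : G ≃g H) : IsDomSet H (D.map φ.toEquiv.toEmbedding) := fun w => by
  obtain ⟨u, hu, huw⟩ := hD (φ.symm w)
  refine ⟨φ u, mem_map_of_mem _ hu, ?_⟩
  rcases huw with rfl | hadj
  · exact Or.inl (φ.apply_symm_apply w)
  · exact Or.inr (by simpa using φ.map_adj_iff.2 hadj)

lemma two_mul_domNum_eq_card_of_iso [Fintype V] (h2 : 2 ≤ domNum G) (φ : G ≃g cycleGraph 4) :
    2 * domNum G = Fintype.card V := by
  have hdom : IsDomSet (cycleGraph 4) {0, 2} := by unfold IsDomSet; decide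
  have := (hdom.map_iso φ.symm).domNum_le
  rw [card_map] at this
  rw [Fintype.card_congr φ.toEquiv, Fintype.card_fin]
  have : #({0, 2} : Finset (Fin 4)) = 2 := rfl
  omega

variable [Fintype V] [DecidableEq V] [DecidableRel G.Adj]

lemma nonempty_iso_cycleGraph_four_of_isRegularOfDegree (hV : Fintype.card V = 4)
    (hG : G.IsRegularOfDegree 2) : Nonempty (G ≃g cycleGraph 4) := by
  obtain ⟨x⟩ : Nonempty V := Fintype.card_pos_iff.1 (by omega)
  obtain ⟨y, z, hyz, hNx⟩ := card_eq_two.1 ((G.card_neighborFinset_eq_degree x).trans (hG x))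
  have hxy : G.Adj x y := by simp [← mem_neighborFinset, hNx]
  have hxz : G.Adj x z := by simp [← mem_neighborFinset, hNx]
  have h3 : #({x, y, z} : Finset V) = 3 := card_eq_three.2 ⟨x, y, z, hxy.ne, hxz.ne, hyz, rfl⟩
  obtain ⟨c, hc⟩ := card_eq_one.1 (by rw [card_compl, h3, hV] : #({x, y, z}ᶜ : Finset V) = 1)
  have hcxyz : c ∉ ({x, y, z} : Finset V) := mem_compl.1 (hc ▸ mem_singleton_self c)
  simp only [mem_insert, mem_singleton, not_or] at hcxyz
  have huniv : ∀ v, v = x ∨ v = y ∨ v = c ∨ v = z := fun v => by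
    by_cases hv : v ∈ ({x, y, z} : Finset V)
    · simp only [mem_insert, mem_singleton] at hv
      tauto
    · rw [← mem_compl, hc, mem_singleton] at hv
      tauto
  have hxc : ¬ G.Adj x c := by simp [← mem_neighborFinset, hNx, hcxyz.2.1, hcxyz.2.2]
  have hNc : G.neighborFinset c = {y, z} := by
    refine eq_of_subset_of_card_le (fun v hv => ?_) ?_
    · rw [mem_neighborFinset] at hv
      rcases huniv v with rfl | rfl | rfl | rfl
      · exact absurd hv.symm hxc
      · simp
      · exact absurd hv (G.irrefl)
      · simp
    · rw [card_pair hyz, card_neighborFinset_eq_degree, hG c]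
  have hcy : G.Adj c y := by simp [← mem_neighborFinset, hNc]
  have hcz : G.Adj c z := by simp [← mem_neighborFinset, hNc]
  refine nonempty_iso_cycleGraph_four_of_adj hV huniv hxy hcy.symm hcz hxz.symm hxc fun hyz' => ?_
  have := card_le_card (show ({x, c, z} : Finset V) ⊆ G.neighborFinset y by
    simp [insert_subset_iff, hxy.symm, hcy.symm, hyz'])
  rw [card_eq_three.2 ⟨x, c, z, Ne.symm hcxyz.1, hxz.ne, hcxyz.2.2, rfl⟩,
    card_neighborFinset_eq_degree, hG y] at this
  omega

lemma degree_add_two_le_card (h2 : 2 ≤ domNum G) (v : V) : G.degree v + 2 ≤ Fintype.card V := by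
  by_contra! hlt
  have hN : G.closedNbhd v = univ :=
    eq_univ_of_card _ (le_antisymm (card_le_univ _) (by rw [card_closedNbhd]; omega))
  have hdom : IsDomSet G {v} :=
    isDomSet_iff.2 fun w => ⟨v, mem_singleton_self v, hN ▸ mem_univ w⟩
  have := hdom.domNum_le
  rw [card_singleton] at this
  omega

lemma HypoED.card_eq_four (h : HypoED G) (heq : 2 * domNum G = Fintype.card V)
    (hdeg : ∀ v, 2 ≤ G.degree v) : Fintype.card V = 4 := by
  have h2 := two_le_domNum h.1
  obtain ⟨x⟩ : Nonempty V := Fintype.card_pos_iff.1 (by omega)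
  obtain ⟨D, hD⟩ := h.exists_isEDSDel x
  have hcard := hD.card_add_one_eq_domNum heq fun d _ => (hdeg d).trans <| by
    simpa [card_closedNbhd] using pred_card_le_card_erase (s := G.closedNbhd d) (a := x)
  have hsum := hD.sum_degree_eq heq hcard fun d hd => hD.not_adj_of_card_add_one_eq hcard hd
  have := card_nsmul_le_sum D (G.degree ·) 2 fun d _ => hdeg d
  rw [smul_eq_mul] at this
  omega

end CycleGraph

theorem hypoED_domNum_bounds_general [Fintype V] (G : SimpleGraph V)
    (h : HypoED G) :
    2 ≤ domNum G ∧ 2 * domNum G ≤ Fintype.card V ∧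
      (2 * domNum G = Fintype.card V ↔ Nonempty (G ≃g cycleGraph 4)) := by
  classical
  have h2 := two_le_domNum h.1
  refine ⟨h2, two_mul_domNum_le_card h.exists_adj, fun heq => ?_,
    fun ⟨φ⟩ => two_mul_domNum_eq_card_of_iso h2 φ⟩
  have hdeg := h.two_le_degree heq
  have hV := h.card_eq_four heq hdeg
  exact nonempty_iso_cycleGraph_four_of_isRegularOfDegree hV fun v => by
    have := degree_add_two_le_card h2 v
    have := hdeg v
    omega

theorem hypoED_domNum_bounds [Fintype V] [DecidableEq V] (G : SimpleGraph V)
    (h : HypoED G) :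
    2 ≤ domNum G ∧ 2 * domNum G ≤ Fintype.card V ∧
      (2 * domNum G = Fintype.card V ↔ Nonempty (G ≃g cycleGraph 4)) :=
  hypoED_domNum_bounds_general G h
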